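/- arXiv:2505.10964 — 4 statements merged into one kernel-verified Lean document; each statement's English description precedes it below -/
import Mathlib

section
/- Let D be a bounded proper subdomain of ℝⁿ, n ≥ 2. Then for all z₁, z₂ ∈ D, k_D(z₁, z₂) ≤ m_D(z₁, z₂) ≤ 2·k_D(z₁, z₂); that is, the metric m_D is 2-bi-Lipschitz equivalent to the quasihyperbolic metric k_D. -/
open Metric Set MeasureTheory intervalIntegral

variable {E : Type*} [NormedAddCommGroup E] [NormedSpace ℝ E]

/-- δ_D(z): the Euclidean distance from `z` to the boundary `∂D`. -/
noncomputable def bdist (D : Set E) (z : E) : ℝ := Metric.infDist z (frontier D)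

/-- The m-density `m_D(z) = d(D) / (δ_D(z)·(d(D) − δ_D(z)))`. -/
noncomputable def mDensity (D : Set E) (z : E) : ℝ :=
  Metric.diam D / (bdist D z * (Metric.diam D - bdist D z))

/-- A rectifiable path in `D` from `x` to `y`, modeled as a Lipschitz map on `[0,1]`. -/
def IsRectPathIn (D : Set E) (x y : E) (γ : ℝ → E) : Prop :=
  (∃ K : NNReal, LipschitzWith K γ) ∧ γ 0 = x ∧ γ 1 = y ∧ ∀ t ∈ Set.Icc (0:ℝ) 1, γ t ∈ D

/-- The line integral `∫_γ ρ(z) |dz|` of a density `ρ` along a path `γ`. -/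
noncomputable def pathIntegral (ρ : E → ℝ) (γ : ℝ → E) : ℝ :=
  ∫ t in (0:ℝ)..1, ρ (γ t) * ‖deriv γ t‖

/-- `inf_γ ∫_γ ρ(z)|dz|` over all rectifiable paths `γ` joining `x` and `y` in `D`. -/
noncomputable def pathDist (ρ : E → ℝ) (D : Set E) (x y : E) : ℝ :=
  sInf (pathIntegral ρ '' {γ | IsRectPathIn D x y γ})

/-- The metric `m_D`. -/
noncomputable def mDist (D : Set E) (x y : E) : ℝ := pathDist (mDensity D) D x y

/-- The quasihyperbolic metric `k_D`. -/
noncomputable def kDist (D : Set E) (x y : E) : ℝ :=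
  pathDist (fun z => 1 / bdist D z) D x y

/-!
Both metrics are infima over the same paths, so it suffices to compare the densities pointwise.
With `δ = δ_D(z)` and `d = d(D)`, the ball `B(z, δ)` lies in `D`, whence `2δ ≤ d`; then
`d - δ ≤ d ≤ 2(d - δ)` gives `1/δ ≤ m_D(z) ≤ 2/δ`.
-/

section Boundary

variable {D : Set E} {z : E}

theorem bdist_pos (hDopen : IsOpen D) (hDproper : D ≠ univ) (hz : z ∈ D) : 0 < bdist D z := by
  have hfr : (frontier D).Nonempty := nonempty_frontier_iff.mpr ⟨⟨z, hz⟩, hDproper⟩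
  have hz_fr : z ∉ frontier D := by
    rw [hDopen.frontier_eq]
    exact fun h => h.2 hz
  exact (isClosed_frontier.notMem_iff_infDist_pos hfr).mp hz_fr

variable [FiniteDimensional ℝ E]

theorem bdist_le_infDist_compl (hDproper : D ≠ univ) (hz : z ∈ D) :
    bdist D z ≤ infDist z Dᶜ := by
  obtain ⟨y, hy, hdist⟩ := exists_mem_frontier_infDist_compl_eq_dist hz hDproper
  rw [hdist]
  exact infDist_le_dist_of_mem hy

theorem ball_bdist_subset (hDproper : D ≠ univ) (hz : z ∈ D) : ball z (bdist D z) ⊆ D :=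
  (ball_subset_ball (bdist_le_infDist_compl hDproper hz)).trans ball_infDist_compl_subset

theorem two_mul_bdist_le_diam [Nontrivial E] (hDbdd : Bornology.IsBounded D)
    (hDproper : D ≠ univ) (hz : z ∈ D) : 2 * bdist D z ≤ diam D := by
  rw [← diam_ball_eq (r := bdist D z) z infDist_nonneg]
  exact diam_mono (ball_bdist_subset hDproper hz) hDbdd

end Boundary

section Density

variable {D : Set E} {z : E}

omit [NormedSpace ℝ E] in
theorem one_div_bdist_le_mDensity (hpos : 0 < bdist D z) (hdiam : 2 * bdist D z ≤ diam D) :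
    1 / bdist D z ≤ mDensity D z := by
  rw [mDensity, div_le_div_iff₀ hpos (by nlinarith)]
  nlinarith

omit [NormedSpace ℝ E] in
theorem mDensity_le_two_mul_one_div_bdist (hpos : 0 < bdist D z)
    (hdiam : 2 * bdist D z ≤ diam D) : mDensity D z ≤ 2 * (1 / bdist D z) := by
  rw [mDensity, mul_one_div, div_le_div_iff₀ (by nlinarith) hpos]
  nlinarith

omit [NormedSpace ℝ E] in
theorem continuousOn_one_div_bdist (hpos : ∀ z ∈ D, 0 < bdist D z) :
    ContinuousOn (fun z => 1 / bdist D z) D :=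
  continuousOn_const.div (continuous_infDist_pt _).continuousOn fun z hz => (hpos z hz).ne'

omit [NormedSpace ℝ E] in
theorem continuousOn_mDensity (hpos : ∀ z ∈ D, 0 < bdist D z)
    (hdiam : ∀ z ∈ D, 2 * bdist D z ≤ diam D) : ContinuousOn (mDensity D) D := by
  have hbdist : Continuous (bdist D) := continuous_infDist_pt _
  refine continuousOn_const.div (hbdist.mul (continuous_const.sub hbdist)).continuousOn
    fun z hz => ?_
  have hδ := hpos z hz
  have hd := hdiam z hz
  exact mul_ne_zero hδ.ne' (by linarith)

end Density

section PathIntegral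

variable {ρ σ : E → ℝ} {D : Set E} {x y : E} {γ : ℝ → E}

theorem intervalIntegrable_norm_deriv [CompleteSpace E] {K : NNReal} (hγ : LipschitzWith K γ)
    (a b : ℝ) : IntervalIntegrable (fun t => ‖deriv γ t‖) volume a b :=
  (intervalIntegrable_const (c := (K : ℝ))).mono_fun (aestronglyMeasurable_deriv γ _).norm
    (ae_of_all _ fun _ => by
      simpa only [norm_norm, Real.norm_eq_abs, abs_norm, NNReal.abs_eq]
        using norm_deriv_le_of_lipschitz hγ)

theorem IsRectPathIn.intervalIntegrable [CompleteSpace E] (hγ : IsRectPathIn D x y γ)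
    (hρ : ContinuousOn ρ D) :
    IntervalIntegrable (fun t => ρ (γ t) * ‖deriv γ t‖) volume 0 1 := by
  obtain ⟨⟨K, hK⟩, -, -, hmem⟩ := hγ
  refine (intervalIntegrable_norm_deriv hK 0 1).continuousOn_mul
    (hρ.comp hK.continuous.continuousOn ?_)
  rwa [uIcc_of_le zero_le_one]

theorem pathIntegral_nonneg (hγ : IsRectPathIn D x y γ) (hρ : ∀ z ∈ D, 0 ≤ ρ z) :
    0 ≤ pathIntegral ρ γ :=
  integral_nonneg zero_le_one fun t ht =>
    mul_nonneg (hρ _ (hγ.2.2.2 t ht)) (norm_nonneg _)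

theorem pathIntegral_mono [CompleteSpace E] (hγ : IsRectPathIn D x y γ) (hρ : ContinuousOn ρ D)
    (hσ : ContinuousOn σ D) (hle : ∀ z ∈ D, ρ z ≤ σ z) :
    pathIntegral ρ γ ≤ pathIntegral σ γ :=
  integral_mono_on zero_le_one (hγ.intervalIntegrable hρ) (hγ.intervalIntegrable hσ)
    fun t ht => mul_le_mul_of_nonneg_right (hle _ (hγ.2.2.2 t ht)) (norm_nonneg _)

theorem pathIntegral_const_mul (c : ℝ) (ρ : E → ℝ) (γ : ℝ → E) :
    pathIntegral (fun z => c * ρ z) γ = c * pathIntegral ρ γ := by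
  simp only [pathIntegral, mul_assoc, intervalIntegral.integral_const_mul]

theorem pathDist_const_mul {c : ℝ} (hc : 0 ≤ c) (ρ : E → ℝ) (D : Set E) (x y : E) :
    pathDist (fun z => c * ρ z) D x y = c * pathDist ρ D x y := by
  rw [pathDist, pathDist, ← smul_eq_mul, ← Real.sInf_smul_of_nonneg hc, ← image_smul,
    image_image]
  simp only [pathIntegral_const_mul, smul_eq_mul]

theorem pathDist_mono [CompleteSpace E] (hρ₀ : ∀ z ∈ D, 0 ≤ ρ z) (hρ : ContinuousOn ρ D)
    (hσ : ContinuousOn σ D) (hle : ∀ z ∈ D, ρ z ≤ σ z) :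
    pathDist ρ D x y ≤ pathDist σ D x y := by
  rcases eq_empty_or_nonempty {γ | IsRectPathIn D x y γ} with hempty | hne
  · simp only [pathDist, hempty, image_empty, le_refl]
  refine le_csInf (hne.image _) ?_
  rintro _ ⟨γ, hγ, rfl⟩
  have hbdd : BddBelow (pathIntegral ρ '' {γ | IsRectPathIn D x y γ}) :=
    ⟨0, by rintro _ ⟨γ', hγ', rfl⟩; exact pathIntegral_nonneg hγ' hρ₀⟩
  exact (csInf_le hbdd ⟨γ, hγ, rfl⟩).trans (pathIntegral_mono hγ hρ hσ hle)

end PathIntegral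

theorem mDist_biLipschitz_kDist_general {n : ℕ}
    (D : Set (EuclideanSpace ℝ (Fin n)))
    (hDopen : IsOpen D)
    (hDbdd : Bornology.IsBounded D) (hDproper : D ≠ Set.univ)
    (z₁ z₂ : EuclideanSpace ℝ (Fin n)) (hz₁ : z₁ ∈ D) :
    kDist D z₁ z₂ ≤ mDist D z₁ z₂ ∧ mDist D z₁ z₂ ≤ 2 * kDist D z₁ z₂ := by
  have : Nontrivial (EuclideanSpace ℝ (Fin n)) := by
    obtain ⟨w, hw⟩ := ne_univ_iff_exists_notMem D |>.mp hDproper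
    exact nontrivial_of_ne z₁ w (ne_of_mem_of_not_mem hz₁ hw)
  have hpos : ∀ z ∈ D, 0 < bdist D z := fun z hz => bdist_pos hDopen hDproper hz
  have hdiam : ∀ z ∈ D, 2 * bdist D z ≤ diam D := fun z hz =>
    two_mul_bdist_le_diam hDbdd hDproper hz
  have hlo : ∀ z ∈ D, 1 / bdist D z ≤ mDensity D z := fun z hz =>
    one_div_bdist_le_mDensity (hpos z hz) (hdiam z hz)
  have hhi : ∀ z ∈ D, mDensity D z ≤ 2 * (1 / bdist D z) := fun z hz =>
    mDensity_le_two_mul_one_div_bdist (hpos z hz) (hdiam z hz)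
  have hk₀ : ∀ z ∈ D, 0 ≤ 1 / bdist D z := fun z hz => (one_div_pos.mpr (hpos z hz)).le
  have hk := continuousOn_one_div_bdist hpos
  have hm := continuousOn_mDensity hpos hdiam
  refine ⟨pathDist_mono hk₀ hk hm hlo, ?_⟩
  rw [kDist, ← pathDist_const_mul zero_le_two]
  exact pathDist_mono (fun z hz => (hk₀ z hz).trans (hlo z hz)) hm (continuousOn_const.mul hk) hhi

/-- Theorem: $m_D$ is 2-bi-Lipschitz equivalent to the
quasihyperbolic metric. For a bounded proper subdomain $D ⊂ ℝ^n$, $n ≥ 2$, and all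
$z_1, z_2 ∈ D$: $k_D(z_1,z_2) ≤ m_D(z_1,z_2) ≤ 2 k_D(z_1,z_2)$. -/
theorem mDist_biLipschitz_kDist {n : ℕ} (hn : 2 ≤ n)
    (D : Set (EuclideanSpace ℝ (Fin n)))
    (hDopen : IsOpen D) (hDconn : IsConnected D)
    (hDbdd : Bornology.IsBounded D) (hDproper : D ≠ Set.univ)
    (z₁ z₂ : EuclideanSpace ℝ (Fin n)) (hz₁ : z₁ ∈ D) (hz₂ : z₂ ∈ D) :
    kDist D z₁ z₂ ≤ mDist D z₁ z₂ ∧ mDist D z₁ z₂ ≤ 2 * kDist D z₁ z₂ :=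
  mDist_biLipschitz_kDist_general D hDopen hDbdd hDproper z₁ z₂ hz₁
end

section
/- Let R > 1 and A_R = {z ∈ ℂ : 1/R < |z| < R}, and let C_r = {z : |z| = r} with 1/R < r < R. Then the m-length of C_r in A_R equals 4πR³r/((Rr − 1)(2R² − Rr + 1)) if 1/R < r ≤ (1 + R²)/(2R), and equals 4πRr/(R² − r²) if (1 + R²)/(2R) ≤ r < R. -/
/-!
On the circle `‖z‖ = r` the distance to `∂A_R = {‖z‖ = 1/R} ∪ {‖z‖ = R}` is the constant
`δ = min (r - 1/R) (R - r)`, and `d(A_R) = 2R`, so the m-density is constant on `C_r` and the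
m-length is `2πr · 2R / (δ (2R - δ))`. The two formulas are the two values of the minimum, which
switch at the midpoint `(1/R + R)/2 = (1 + R²)/(2R)`.
-/

open Metric Set

variable {E : Type*} [NormedAddCommGroup E] [NormedSpace ℝ E]

/-- The m-length of the circle $C_r = \{|z| = r\}$ inside $D$, computed from the
parametrization $z = r e^{iθ}$, $0 ≤ θ ≤ 2π$: $∫_0^{2π} m_D(r e^{iθ}) r\,dθ$. -/
noncomputable def mCircleLength (D : Set ℂ) (r : ℝ) : ℝ :=
  ∫ θ in (0:ℝ)..(2 * Real.pi), mDensity D ((r : ℂ) * Complex.exp (θ * Complex.I)) * r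

theorem Metric.infDist_union {α : Type*} [PseudoMetricSpace α] {x : α} {s t : Set α}
    (hs : s.Nonempty) (ht : t.Nonempty) :
    infDist x (s ∪ t) = min (infDist x s) (infDist x t) := by
  rw [infDist, infEDist_union, ENNReal.toReal_min (infEDist_ne_top hs) (infEDist_ne_top ht)]
  rfl

theorem Metric.infDist_sphere_zero {z : E} (hz : z ≠ 0) {a : ℝ} (ha : 0 ≤ a) :
    infDist z (sphere 0 a) = |‖z‖ - a| := by
  have hnz : 0 < ‖z‖ := norm_pos_iff.mpr hz
  set w := (a / ‖z‖) • z
  have hw : w ∈ sphere (0 : E) a := by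
    simp [w, norm_smul, abs_of_nonneg ha, hnz.ne']
  refine le_antisymm ?_ ((le_infDist ⟨w, hw⟩).mpr fun y hy ↦ ?_)
  · calc infDist z (sphere 0 a) ≤ dist z w := infDist_le_dist_of_mem hw
      _ = ‖(1 - a / ‖z‖) • z‖ := by rw [dist_eq_norm, sub_smul, one_smul]
      _ = |1 - a / ‖z‖| * ‖z‖ := by rw [norm_smul, Real.norm_eq_abs]
      _ = |‖z‖ - a| := by
        rw [← abs_of_pos hnz, ← abs_mul, abs_of_pos hnz, sub_mul, div_mul_cancel₀ _ hnz.ne', one_mul]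
  · rw [mem_sphere_zero_iff_norm] at hy
    simpa [hy, dist_eq_norm] using abs_norm_sub_norm_le z y

def annulus {F : Type*} [Norm F] (a b : ℝ) : Set F := {z | a < ‖z‖ ∧ ‖z‖ < b}

section annulus

variable {a b : ℝ}

theorem isOpen_annulus {F : Type*} [SeminormedAddGroup F] : IsOpen (annulus a b : Set F) :=
  (isOpen_lt continuous_const continuous_norm).inter (isOpen_lt continuous_norm continuous_const)

theorem annulus_subset_ball {F : Type*} [SeminormedAddGroup F] :
    (annulus a b : Set F) ⊆ ball 0 b :=
  fun _ hz ↦ mem_ball_zero_iff.mpr hz.2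

theorem closure_annulus (ha : 0 < a) (hab : a < b) :
    closure (annulus a b : Set E) = {z | a ≤ ‖z‖ ∧ ‖z‖ ≤ b} := by
  refine subset_antisymm (closure_minimal (fun z hz ↦ ⟨hz.1.le, hz.2.le⟩)
    ((isClosed_le continuous_const continuous_norm).inter
      (isClosed_le continuous_norm continuous_const))) fun w ⟨haw, hwb⟩ ↦ ?_
  -- approach `w` along the ray `t ↦ t • w`, which stays in the annulus for `t` near `1`
  have hw : 0 < ‖w‖ := ha.trans_le haw
  have hray : (fun t : ℝ ↦ t • w) '' Ioo (a / ‖w‖) (b / ‖w‖) ⊆ annulus a b := by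
    rintro _ ⟨t, ⟨hat, htb⟩, rfl⟩
    have ht : 0 < t := (div_pos ha hw).trans hat
    rw [div_lt_iff₀ hw] at hat
    rw [lt_div_iff₀ hw] at htb
    simpa [annulus, norm_smul, abs_of_pos ht] using ⟨hat, htb⟩
  have h1 : (1 : ℝ) ∈ closure (Ioo (a / ‖w‖) (b / ‖w‖)) := by
    rw [closure_Ioo (div_lt_div_of_pos_right hab hw).ne]
    exact ⟨(div_le_one hw).mpr haw, (one_le_div hw).mpr hwb⟩
  simpa using closure_mono hray
    (image_closure_subset_closure_image (continuous_id.smul continuous_const) ⟨1, h1, rfl⟩)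

theorem frontier_annulus (ha : 0 < a) (hab : a < b) :
    frontier (annulus a b : Set E) = sphere 0 a ∪ sphere 0 b := by
  ext z
  rw [frontier, isOpen_annulus.interior_eq, closure_annulus ha hab]
  simp only [annulus, mem_sdiff, mem_ofPred_eq, mem_union, mem_sphere_zero_iff_norm]
  constructor
  · rintro ⟨⟨h₁, h₂⟩, h⟩
    by_contra! h'
    exact h ⟨lt_of_le_of_ne h₁ h'.1.symm, lt_of_le_of_ne h₂ h'.2⟩
  · rintro (h | h) <;> simp [h, hab.le]

theorem bdist_annulus (ha : 0 < a) (hab : a < b) {z : E} (hz : z ∈ annulus a b) :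
    bdist (annulus a b) z = min (‖z‖ - a) (b - ‖z‖) := by
  have hz0 : z ≠ 0 := norm_pos_iff.mp (ha.trans hz.1)
  have hne : ∀ c, 0 < c → (sphere (0 : E) c).Nonempty := fun c hc ↦
    ⟨(c / ‖z‖) • z, by simp [norm_smul, abs_of_pos hc, norm_ne_zero_iff.mpr hz0]⟩
  rw [bdist, frontier_annulus ha hab, infDist_union (hne a ha) (hne b (ha.trans hab)),
    infDist_sphere_zero hz0 ha.le, infDist_sphere_zero hz0 (ha.trans hab).le,
    abs_of_pos (sub_pos.mpr hz.1), abs_sub_comm, abs_of_pos (sub_pos.mpr hz.2)]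

theorem diam_annulus [Nontrivial E] (ha : 0 < a) (hab : a < b) :
    diam (annulus a b : Set E) = 2 * b := by
  have hb : 0 ≤ b := (ha.trans hab).le
  refine le_antisymm ((diam_mono annulus_subset_ball isBounded_ball).trans (diam_ball hb)) ?_
  have hsphere : sphere (0 : E) b ⊆ closure (annulus a b) := by
    rw [closure_annulus ha hab]
    intro z hz
    rw [mem_sphere_zero_iff_norm] at hz
    exact ⟨hz ▸ hab.le, hz.le⟩
  rw [← diam_closure, ← diam_sphere_eq (0 : E) hb]
  exact diam_mono hsphere (isBounded_ball.subset annulus_subset_ball).closure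

end annulus

theorem mCircleLength_of_forall_norm_eq {D : Set ℂ} {r c : ℝ} (hr : 0 ≤ r)
    (h : ∀ z : ℂ, ‖z‖ = r → mDensity D z = c) :
    mCircleLength D r = 2 * Real.pi * (c * r) := by
  have hz : ∀ θ : ℝ, ‖(r : ℂ) * Complex.exp (θ * Complex.I)‖ = r := fun θ ↦ by
    rw [norm_mul, Complex.norm_exp_ofReal_mul_I, mul_one, Complex.norm_real, Real.norm_of_nonneg hr]
  simp only [mCircleLength, h _ (hz _), intervalIntegral.integral_const, smul_eq_mul, sub_zero]

/-- Proposition: m-perimeter of circles in the annulus $A_R$.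
For $R > 1$, $A_R = \{1/R < |z| < R\}$ and $1/R < r < R$, the m-length of $C_r$ in
$A_R$ equals $4πR^3r/((Rr−1)(2R^2−Rr+1))$ if $r ≤ (1+R^2)/(2R)$ and
$4πRr/(R^2−r^2)$ if $r ≥ (1+R^2)/(2R)$. -/
theorem mCircleLength_annulus (R r : ℝ) (hR : 1 < R)
    (hr₁ : 1 / R < r) (hr₂ : r < R) :
    (r ≤ (1 + R ^ 2) / (2 * R) →
      mCircleLength {z : ℂ | 1 / R < ‖z‖ ∧ ‖z‖ < R} r
        = 4 * Real.pi * R ^ 3 * r / ((R * r - 1) * (2 * R ^ 2 - R * r + 1))) ∧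
    ((1 + R ^ 2) / (2 * R) ≤ r →
      mCircleLength {z : ℂ | 1 / R < ‖z‖ ∧ ‖z‖ < R} r
        = 4 * Real.pi * R * r / (R ^ 2 - r ^ 2)) := by
  have ha : 0 < 1 / R := one_div_pos.mpr (one_pos.trans hR)
  have hab : 1 / R < R := hr₁.trans hr₂
  have hlen : mCircleLength (annulus (1 / R) R) r = 2 * Real.pi * (2 * R /
      (min (r - 1 / R) (R - r) * (2 * R - min (r - 1 / R) (R - r))) * r) := by
    refine mCircleLength_of_forall_norm_eq (ha.trans hr₁).le fun z hz ↦ ?_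
    rw [mDensity, bdist_annulus ha hab ⟨hz ▸ hr₁, hz ▸ hr₂⟩, diam_annulus ha hab, hz]
  have hmid : (1 + R ^ 2) / (2 * R) = (1 / R + R) / 2 := by field_simp
  refine ⟨fun h ↦ ?_, fun h ↦ ?_⟩
  · rw [min_eq_left (by linarith)] at hlen
    change mCircleLength (annulus (1 / R) R) r = _
    rw [hlen]
    field_simp
    ring
  · rw [min_eq_right (by linarith)] at hlen
    change mCircleLength (annulus (1 / R) R) r = _
    rw [hlen, show 2 * R - (R - r) = R + r by ring, show R ^ 2 - r ^ 2 = (R - r) * (R + r) by ring]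
    field_simp
    ring
end

section
/- Let R > 0 and 𝔻_R^* = {z ∈ ℂ : 0 < |z| < R}. For any two points z₁, z₂ ∈ 𝔻_R^* with |z₁| = |z₂| = r, one has m_{𝔻_R^*}(z₁, z₂) ≤ 4πR/(2R − r) if 0 < r ≤ R/2, and m_{𝔻_R^*}(z₁, z₂) ≤ 4πRr/(R² − r²) if R/2 ≤ r < R. -/
/-!
Join `z₁` and `z₂` by the arc of the circle `|z| = r` running from `arg z₁` to `arg z₂`; it has
length at most `2πr`. On that circle the distance to the boundary `{|z| = R} ∪ {0}` is
`δ = min r (R - r)` and the diameter of the punctured disk is `2R`, so the m-density is the constant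
`2R / (δ (2R - δ))`. The two cases of the bound are the two possible values of `δ`.
-/

open Metric Set

variable {E : Type*} [NormedAddCommGroup E] [NormedSpace ℝ E]

section PathDist

theorem bdist_le_diam {F : Type*} [NormedAddCommGroup F] {D : Set F} {z : F}
    (hD : Bornology.IsBounded D) (hz : z ∈ D) : bdist D z ≤ diam D := by
  rcases (frontier D).eq_empty_or_nonempty with h | ⟨w, hw⟩
  · simp [bdist, h, diam_nonneg]
  · calc bdist D z ≤ dist z w := infDist_le_dist_of_mem hw
      _ ≤ diam (closure D) :=
        dist_le_diam_of_mem hD.closure (subset_closure hz) (frontier_subset_closure hw)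
      _ = diam D := diam_closure D

theorem mDensity_nonneg {F : Type*} [NormedAddCommGroup F] {D : Set F} {z : F}
    (hD : Bornology.IsBounded D) (hz : z ∈ D) : 0 ≤ mDensity D z :=
  div_nonneg diam_nonneg (mul_nonneg infDist_nonneg (sub_nonneg.2 (bdist_le_diam hD hz)))

variable {D : Set E} {x y : E} {ρ : E → ℝ} {γ : ℝ → E}

theorem pathDist_le_pathIntegral (hρ : ∀ z ∈ D, 0 ≤ ρ z) (hγ : IsRectPathIn D x y γ) :
    pathDist ρ D x y ≤ pathIntegral ρ γ := by
  refine csInf_le ⟨0, ?_⟩ ⟨γ, hγ, rfl⟩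
  rintro _ ⟨γ', hγ', rfl⟩
  exact intervalIntegral.integral_nonneg zero_le_one fun t ht =>
    mul_nonneg (hρ _ (hγ'.2.2.2 t ht)) (norm_nonneg _)

theorem pathIntegral_eq_of_const {c L : ℝ} (hρ : ∀ t ∈ Icc (0 : ℝ) 1, ρ (γ t) = c)
    (hγ : ∀ t ∈ Icc (0 : ℝ) 1, ‖deriv γ t‖ = L) : pathIntegral ρ γ = c * L := by
  have hconst : ∀ t ∈ uIcc (0 : ℝ) 1, ρ (γ t) * ‖deriv γ t‖ = c * L := fun t ht => by
    rw [uIcc_of_le zero_le_one] at ht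
    rw [hρ t ht, hγ t ht]
  rw [pathIntegral, intervalIntegral.integral_congr hconst, intervalIntegral.integral_const,
    sub_zero, one_smul]

end PathDist

section CircleArc

open Complex Real

noncomputable def circleArc (r θ₁ θ₂ t : ℝ) : ℂ := circleMap 0 r (θ₁ + t * (θ₂ - θ₁))

variable {r θ₁ θ₂ : ℝ}

theorem hasDerivAt_circleArc (t : ℝ) :
    HasDerivAt (circleArc r θ₁ θ₂)
      ((θ₂ - θ₁) • (circleMap 0 r (θ₁ + t * (θ₂ - θ₁)) * I)) t := by
  have hlin : HasDerivAt (fun t : ℝ => θ₁ + t * (θ₂ - θ₁)) (θ₂ - θ₁) t := by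
    simpa using ((hasDerivAt_id t).mul_const (θ₂ - θ₁)).const_add θ₁
  exact (hasDerivAt_circleMap 0 r _).scomp t hlin

theorem norm_deriv_circleArc (t : ℝ) : ‖deriv (circleArc r θ₁ θ₂) t‖ = |r| * |θ₂ - θ₁| := by
  rw [(hasDerivAt_circleArc t).deriv, norm_smul, norm_mul, norm_circleMap_zero, norm_I,
    Real.norm_eq_abs]
  ring

theorem norm_circleArc (t : ℝ) : ‖circleArc r θ₁ θ₂ t‖ = |r| := norm_circleMap_zero r _

theorem lipschitzWith_circleArc :
    LipschitzWith (Real.nnabs r * Real.nnabs (θ₂ - θ₁)) (circleArc r θ₁ θ₂) := by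
  refine lipschitzWith_of_nnnorm_deriv_le (fun t => (hasDerivAt_circleArc t).differentiableAt)
    fun t => ?_
  rw [← NNReal.coe_le_coe, coe_nnnorm, norm_deriv_circleArc]
  simp

theorem circleMap_norm_arg (z : ℂ) : circleMap 0 ‖z‖ z.arg = z := by
  rw [circleMap_zero, norm_mul_exp_arg_mul_I]

theorem isRectPathIn_circleArc {D : Set ℂ} {z₁ z₂ : ℂ} (h : ‖z₁‖ = ‖z₂‖)
    (hD : sphere (0 : ℂ) ‖z₁‖ ⊆ D) : IsRectPathIn D z₁ z₂ (circleArc ‖z₁‖ z₁.arg z₂.arg) := by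
  refine ⟨⟨_, lipschitzWith_circleArc⟩, ?_, ?_, fun t _ => hD ?_⟩
  · simp [circleArc, circleMap_norm_arg]
  · simp [circleArc, h, circleMap_norm_arg]
  · simp [norm_circleArc]

theorem abs_arg_sub_arg_le (z₁ z₂ : ℂ) : |z₂.arg - z₁.arg| ≤ 2 * π := by
  have := neg_pi_lt_arg z₁; have := arg_le_pi z₁
  have := neg_pi_lt_arg z₂; have := arg_le_pi z₂
  rw [abs_le]; constructor <;> linarith

theorem pathDist_le_of_const_on_sphere {ρ : ℂ → ℝ} {D : Set ℂ} {r c : ℝ} {z₁ z₂ : ℂ}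
    (hρ : ∀ z ∈ D, 0 ≤ ρ z) (hD : sphere (0 : ℂ) r ⊆ D) (hc : ∀ z ∈ sphere (0 : ℂ) r, ρ z = c)
    (h₁ : ‖z₁‖ = r) (h₂ : ‖z₂‖ = r) : pathDist ρ D z₁ z₂ ≤ 2 * π * r * c := by
  subst h₁
  have hz₁ : z₁ ∈ sphere (0 : ℂ) ‖z₁‖ := mem_sphere_zero_iff_norm.2 rfl
  have hc0 : 0 ≤ c := hc z₁ hz₁ ▸ hρ z₁ (hD hz₁)
  have hlen :
      pathIntegral ρ (circleArc ‖z₁‖ z₁.arg z₂.arg) = c * (‖z₁‖ * |z₂.arg - z₁.arg|) := by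
    refine pathIntegral_eq_of_const (fun t _ => hc _ ?_) fun t _ => ?_
    · simp [norm_circleArc]
    · rw [norm_deriv_circleArc, abs_norm]
  calc pathDist ρ D z₁ z₂ ≤ c * (‖z₁‖ * |z₂.arg - z₁.arg|) :=
        hlen ▸ pathDist_le_pathIntegral hρ (isRectPathIn_circleArc h₂.symm hD)
    _ ≤ c * (‖z₁‖ * (2 * π)) := by gcongr; exact abs_arg_sub_arg_le z₁ z₂
    _ = 2 * π * ‖z₁‖ * c := by ring

end CircleArc

section PuncturedBall

variable {R : ℝ} (c : E)

theorem closure_ball_sdiff_center [Nontrivial E] (hR : R ≠ 0) :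
    closure (ball c R \ {c}) = closedBall c R := by
  refine (closure_mono sdiff_subset).trans_eq (closure_ball c hR) |>.antisymm ?_
  rw [← closure_ball c hR]
  exact closure_minimal ((dense_compl_singleton c).open_subset_closure_inter isOpen_ball)
    isClosed_closure

theorem frontier_ball_sdiff_center [Nontrivial E] (hR : 0 < R) :
    frontier (ball c R \ {c}) = sphere c R ∪ {c} := by
  rw [frontier, closure_ball_sdiff_center c hR.ne',
    (isOpen_ball.sdiff isClosed_singleton).interior_eq, sdiff_sdiff_right, closedBall_sdiff_ball,
    inter_eq_right.2 (singleton_subset_iff.2 (mem_closedBall_self hR.le))]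

theorem diam_ball_sdiff_center [Nontrivial E] (hR : 0 < R) : diam (ball c R \ {c}) = 2 * R := by
  rw [← diam_closure, closure_ball_sdiff_center c hR.ne', diam_closedBall_eq c hR.le]

theorem infDist_sphere_union_center {z : E} (hz : z ≠ c) (hzR : dist z c ≤ R) :
    infDist z (sphere c R ∪ {c}) = min (dist z c) (R - dist z c) := by
  set d := dist z c
  have hd : 0 < d := dist_pos.2 hz
  refine le_antisymm (le_min (infDist_le_dist_of_mem (Or.inr rfl)) ?_) ?_
  · set w := c + (R / d) • (z - c)
    have hw : w ∈ sphere c R := by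
      rw [mem_sphere, dist_eq_norm, add_sub_cancel_left, norm_smul, ← dist_eq_norm,
        Real.norm_of_nonneg (div_nonneg (hd.le.trans hzR) hd.le), div_mul_cancel₀ _ hd.ne']
    calc infDist z (sphere c R ∪ {c}) ≤ dist z w := infDist_le_dist_of_mem (Or.inl hw)
      _ = R - d := by
        rw [dist_eq_norm, show z - w = (1 - R / d) • (z - c) by simp only [w]; module,
          norm_smul, Real.norm_of_nonpos, ← dist_eq_norm, neg_sub, sub_mul,
          div_mul_cancel₀ _ hd.ne', one_mul]
        rw [sub_nonpos, le_div_iff₀ hd, one_mul]; exact hzR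
  · rw [le_infDist ⟨c, Or.inr rfl⟩]
    rintro w (hw | rfl)
    · rw [mem_sphere] at hw
      linarith [min_le_right d (R - d), dist_triangle w z c, dist_comm z w]
    · exact min_le_left _ _

theorem bdist_ball_sdiff_center [Nontrivial E] (hR : 0 < R) {z : E}
    (hz : z ∈ ball c R \ {c}) :
    bdist (ball c R \ {c}) z = min (dist z c) (R - dist z c) := by
  rw [bdist, frontier_ball_sdiff_center c hR]
  exact infDist_sphere_union_center c hz.2 (mem_ball.1 hz.1).le

theorem mDensity_ball_sdiff_center [Nontrivial E] (hR : 0 < R) {z : E}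
    (hz : z ∈ ball c R \ {c}) :
    mDensity (ball c R \ {c}) z =
      2 * R / (min (dist z c) (R - dist z c) * (2 * R - min (dist z c) (R - dist z c))) := by
  rw [mDensity, diam_ball_sdiff_center c hR, bdist_ball_sdiff_center c hR hz]

end PuncturedBall

open Real in
theorem mDist_ball_sdiff_zero_le_of_norm_eq {R r : ℝ} {z₁ z₂ : ℂ} (hr : 0 < r) (hrR : r < R)
    (h₁ : ‖z₁‖ = r) (h₂ : ‖z₂‖ = r) :
    mDist (ball (0 : ℂ) R \ {0}) z₁ z₂ ≤
      2 * π * r * (2 * R / (min r (R - r) * (2 * R - min r (R - r)))) := by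
  have hsphere : sphere (0 : ℂ) r ⊆ ball 0 R \ {0} := fun z hz =>
    ⟨mem_ball.2 ((mem_sphere.1 hz).trans_lt hrR), ne_of_mem_sphere hz hr.ne'⟩
  refine pathDist_le_of_const_on_sphere
    (fun z hz => mDensity_nonneg (isBounded_ball.subset sdiff_subset) hz) hsphere
    (fun z hz => ?_) h₁ h₂
  rw [mDensity_ball_sdiff_center 0 (hr.trans hrR) (hsphere hz), mem_sphere.1 hz]

theorem mDist_puncturedDisk_bound_general (R r : ℝ)
    (z₁ z₂ : ℂ)
    (hr₁ : ‖z₁‖ = r) (hr₂ : ‖z₂‖ = r) :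
    (0 < r ∧ r ≤ R / 2 →
      mDist {z : ℂ | 0 < ‖z‖ ∧ ‖z‖ < R} z₁ z₂ ≤ 4 * Real.pi * R / (2 * R - r)) ∧
    (R / 2 ≤ r ∧ r < R →
      mDist {z : ℂ | 0 < ‖z‖ ∧ ‖z‖ < R} z₁ z₂
        ≤ 4 * Real.pi * R * r / (R ^ 2 - r ^ 2)) := by
  have hD : {z : ℂ | 0 < ‖z‖ ∧ ‖z‖ < R} = ball 0 R \ {0} := by
    ext z
    simp [and_comm]
  rw [hD]
  refine ⟨fun ⟨hr, hrR⟩ => ?_, fun ⟨hRr, hrR⟩ => ?_⟩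
  · have h := mDist_ball_sdiff_zero_le_of_norm_eq hr (by linarith) hr₁ hr₂
    rw [min_eq_left (by linarith)] at h
    refine h.trans_eq ?_
    field_simp
    ring
  · have h := mDist_ball_sdiff_zero_le_of_norm_eq (by linarith) hrR hr₁ hr₂
    rw [min_eq_right (by linarith)] at h
    refine h.trans_eq ?_
    have : R + r ≠ 0 := by linarith
    field_simp
    ring

/-- Corollary: bounds on the $m$-distance between points on a common
circle in the punctured disk $𝔻_R^* = \{0 < |z| < R\}$.
If $|z_1| = |z_2| = r$, then $m_{𝔻_R^*}(z_1,z_2) ≤ 4πR/(2R−r)$ if $0 < r ≤ R/2$, and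
$m_{𝔻_R^*}(z_1,z_2) ≤ 4πRr/(R^2−r^2)$ if $R/2 ≤ r < R$. -/
theorem mDist_puncturedDisk_bound (R r : ℝ) (hR : 0 < R)
    (z₁ z₂ : ℂ)
    (hz₁ : z₁ ∈ {z : ℂ | 0 < ‖z‖ ∧ ‖z‖ < R})
    (hz₂ : z₂ ∈ {z : ℂ | 0 < ‖z‖ ∧ ‖z‖ < R})
    (hr₁ : ‖z₁‖ = r) (hr₂ : ‖z₂‖ = r) :
    (0 < r ∧ r ≤ R / 2 →
      mDist {z : ℂ | 0 < ‖z‖ ∧ ‖z‖ < R} z₁ z₂ ≤ 4 * Real.pi * R / (2 * R - r)) ∧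
    (R / 2 ≤ r ∧ r < R →
      mDist {z : ℂ | 0 < ‖z‖ ∧ ‖z‖ < R} z₁ z₂
        ≤ 4 * Real.pi * R * r / (R ^ 2 - r ^ 2)) :=
  mDist_puncturedDisk_bound_general R r z₁ z₂ hr₁ hr₂
end

section
/- Let R > 0 and consider the density ρ(z) = 2R/(|z|(2R − |z|)) of the m-metric on the region {z ∈ ℂ : 0 < |z| < R/2} of the punctured disk 𝔻_R^* = {z : 0 < |z| < R}. Then at every point z of this region, Δ(log ρ)(z) = 2R/(|z|(2R − |z|)²), and hence the Gaussian curvature K(z) = −Δ(log ρ)(z)/ρ(z)² equals −|z|/(2R), which lies in the interval (−1/4, 0). -/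
/-!
The function `log ρ` is radial: `log ρ(w) = g(|w|)` with `g(s) = log (2R / (s(2R - s)))`.
Differentiating `t ↦ g(|z + t v|)` twice at `0` for `v = 1` and `v = i` and adding, the
terms `(⟪z, v⟫ / |z|)²` sum to `1`, so `Δ(g ∘ |·|)(z) = g''(r) + g'(r)/r` with `r = |z|`.
Here `g'(s) = 1/(2R - s) - 1/s` and `g''(s) = 1/(2R - s)² + 1/s²`, which gives
`Δ log ρ(z) = 2R / (r(2R - r)²)`; dividing by `ρ(z)² = (2R / (r(2R - r)))²` leaves `-r/(2R)`,
and `0 < r < R/2` puts this in `(-1/4, 0)`.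
-/

open Metric Set

/-- The Laplacian `Δf = ∂²f/∂x² + ∂²f/∂y²` of a function `f : ℂ → ℝ`, identifying
`ℂ` with `ℝ²`: the sum of the second derivatives of `f` along the horizontal line
`t ↦ z + t` and the vertical line `t ↦ z + t·i` through `z`. -/
noncomputable def laplacian (f : ℂ → ℝ) (z : ℂ) : ℝ :=
  deriv (deriv (fun t : ℝ => f (z + t))) 0 +
    deriv (deriv (fun t : ℝ => f (z + t * Complex.I))) 0

open Filter Topology RealInnerProductSpace

theorem deriv_deriv_comp_eq {g g' N N' : ℝ → ℝ} {g'' N'' t₀ : ℝ}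
    (hg : ∀ᶠ s in 𝓝 (N t₀), HasDerivAt g (g' s) s) (hg' : HasDerivAt g' g'' (N t₀))
    (hN : ∀ᶠ t in 𝓝 t₀, HasDerivAt N (N' t) t) (hN' : HasDerivAt N' N'' t₀) :
    deriv (deriv fun t => g (N t)) t₀ = g'' * N' t₀ ^ 2 + g' (N t₀) * N'' := by
  have hgN : ∀ᶠ t in 𝓝 t₀, HasDerivAt g (g' (N t)) (N t) :=
    hN.self_of_nhds.continuousAt.tendsto.eventually hg
  have hderiv : deriv (fun t => g (N t)) =ᶠ[𝓝 t₀] fun t => g' (N t) * N' t := by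
    filter_upwards [hgN, hN] with t hgt hNt
    exact (hgt.comp t hNt).deriv
  rw [hderiv.deriv_eq]
  exact ((hg'.comp t₀ hN.self_of_nhds).mul hN').deriv.trans (by rw [Function.comp_apply]; ring)

section InnerProductSpace

variable {E : Type*} [NormedAddCommGroup E] [InnerProductSpace ℝ E]

theorem HasDerivAt.norm {f : ℝ → E} {f' : E} {x : ℝ} (hf : HasDerivAt f f' x)
    (h0 : f x ≠ 0) : HasDerivAt (fun y => ‖f y‖) (⟪f x, f'⟫ / ‖f x‖) x := by
  have hsqrt := hf.norm_sq.sqrt (by positivity)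
  simp only [Real.sqrt_sq (norm_nonneg _)] at hsqrt
  refine hsqrt.congr_deriv ?_
  have : ‖f x‖ ≠ 0 := norm_ne_zero_iff.mpr h0
  field_simp

theorem hasDerivAt_norm_add_smul {z v : E} {t : ℝ} (h : z + t • v ≠ 0) :
    HasDerivAt (fun s : ℝ => ‖z + s • v‖) (⟪z + t • v, v⟫ / ‖z + t • v‖) t := by
  simpa using (((hasDerivAt_id t).smul_const v).const_add z).norm h

theorem hasDerivAt_inner_div_norm_add_smul {z : E} (v : E) (hz : z ≠ 0) :
    HasDerivAt (fun s : ℝ => ⟪z + s • v, v⟫ / ‖z + s • v‖)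
      ((‖v‖ ^ 2 - (⟪z, v⟫ / ‖z‖) ^ 2) / ‖z‖) 0 := by
  have hinner : HasDerivAt (fun s : ℝ => ⟪z + s • v, v⟫) ⟪v, v⟫ 0 := by
    simpa [inner_add_left, inner_smul_left] using
      ((hasDerivAt_id (0 : ℝ)).mul_const ⟪v, v⟫).const_add ⟪z, v⟫
  have hz' : z + (0 : ℝ) • v ≠ 0 := by simpa using hz
  have hquot := hinner.div (hasDerivAt_norm_add_smul hz') (by simpa using hz)
  simp only [zero_smul, add_zero, real_inner_self_eq_norm_sq] at hquot
  refine hquot.congr_deriv ?_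
  have : ‖z‖ ≠ 0 := norm_ne_zero_iff.mpr hz
  field_simp

theorem deriv_deriv_comp_norm_add_smul {g g' : ℝ → ℝ} {g'' : ℝ} {z : E} (v : E) (hz : z ≠ 0)
    (hg : ∀ᶠ s in 𝓝 ‖z‖, HasDerivAt g (g' s) s) (hg' : HasDerivAt g' g'' ‖z‖) :
    deriv (deriv fun t : ℝ => g ‖z + t • v‖) 0 =
      g'' * (⟪z, v⟫ / ‖z‖) ^ 2 + g' ‖z‖ * ((‖v‖ ^ 2 - (⟪z, v⟫ / ‖z‖) ^ 2) / ‖z‖) := by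
  have hne : ∀ᶠ t : ℝ in 𝓝 0, z + t • v ≠ 0 :=
    (continuous_const.add (continuous_id.smul continuous_const)).continuousAt.eventually_ne
      (by simpa using hz)
  have hN := hne.mono fun t ht => hasDerivAt_norm_add_smul (v := v) ht
  simpa using deriv_deriv_comp_eq (N := fun t : ℝ => ‖z + t • v‖) (by simpa using hg)
    (by simpa using hg') hN (hasDerivAt_inner_div_norm_add_smul v hz)

end InnerProductSpace

theorem laplacian_comp_norm {g g' : ℝ → ℝ} {g'' : ℝ} {z : ℂ} (hz : z ≠ 0)
    (hg : ∀ᶠ s in 𝓝 ‖z‖, HasDerivAt g (g' s) s) (hg' : HasDerivAt g' g'' ‖z‖) :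
    laplacian (fun w => g ‖w‖) z = g'' + g' ‖z‖ / ‖z‖ := by
  have hre : (fun t : ℝ => g ‖z + t‖) = fun t : ℝ => g ‖z + t • (1 : ℂ)‖ := by
    simp only [Complex.real_smul, mul_one]
  have him : (fun t : ℝ => g ‖z + t * Complex.I‖) = fun t : ℝ => g ‖z + t • Complex.I‖ := by
    simp only [Complex.real_smul]
  rw [laplacian, hre, him, deriv_deriv_comp_norm_add_smul 1 hz hg hg',
    deriv_deriv_comp_norm_add_smul Complex.I hz hg hg']
  have hnorm : z.re ^ 2 + z.im ^ 2 = ‖z‖ ^ 2 := by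
    rw [Complex.sq_norm, Complex.normSq_apply]; ring
  have : ‖z‖ ≠ 0 := norm_ne_zero_iff.mpr hz
  simp only [Complex.inner, Complex.conj_re, Complex.conj_im, Complex.one_re, Complex.one_im,
    Complex.mul_re, Complex.I_re, Complex.I_im, norm_one, Complex.norm_I]
  field_simp
  linear_combination (g'' * ‖z‖ - g' ‖z‖) * hnorm

theorem hasDerivAt_log_mDensity {R s : ℝ} (hs : 0 < s) (hsR : s < 2 * R) :
    HasDerivAt (fun s => Real.log (2 * R / (s * (2 * R - s)))) ((2 * R - s)⁻¹ - s⁻¹) s := by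
  have hR : 0 < R := by linarith
  have hsR' : 0 < 2 * R - s := by linarith
  have hden : HasDerivAt (fun s => s * (2 * R - s)) (1 * (2 * R - s) + s * -1) s :=
    (hasDerivAt_id' s).mul ((hasDerivAt_id' s).const_sub (2 * R))
  have hquot : HasDerivAt (fun s => 2 * R / (s * (2 * R - s)))
      ((0 * (s * (2 * R - s)) - 2 * R * (1 * (2 * R - s) + s * -1)) / (s * (2 * R - s)) ^ 2) s :=
    (hasDerivAt_const s (2 * R)).div hden (by positivity)
  refine (hquot.log (by positivity)).congr_deriv ?_
  field_simp
  ring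

theorem curvature_puncturedDisk_general (R : ℝ)
    (ρ : ℂ → ℝ) (hρ : ∀ w : ℂ, ρ w = 2 * R / (‖w‖ * (2 * R - ‖w‖)))
    (z : ℂ) (hz₁ : 0 < ‖z‖) (hz₂ : ‖z‖ < R / 2) :
    laplacian (fun w => Real.log (ρ w)) z = 2 * R / (‖z‖ * (2 * R - ‖z‖) ^ 2) ∧
    -(laplacian (fun w => Real.log (ρ w)) z) / (ρ z) ^ 2 = -(‖z‖ / (2 * R)) ∧
    -(‖z‖ / (2 * R)) ∈ Set.Ioo (-(1 / 4) : ℝ) 0 := by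
  have hz : ‖z‖ ≠ 0 := hz₁.ne'
  have hR : 0 < R := by linarith
  have hzR : 2 * R - ‖z‖ ≠ 0 := by linarith
  have hg : ∀ᶠ s in 𝓝 ‖z‖,
      HasDerivAt (fun s => Real.log (2 * R / (s * (2 * R - s)))) ((2 * R - s)⁻¹ - s⁻¹) s :=
    eventually_of_mem (Ioo_mem_nhds hz₁ (by linarith : ‖z‖ < 2 * R)) fun s hs =>
      hasDerivAt_log_mDensity hs.1 hs.2
  have hg' : HasDerivAt (fun s => (2 * R - s)⁻¹ - s⁻¹)
      (((2 * R - ‖z‖) ^ 2)⁻¹ + (‖z‖ ^ 2)⁻¹) ‖z‖ := by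
    refine ((((hasDerivAt_id' ‖z‖).const_sub (2 * R)).inv hzR).sub
      (hasDerivAt_inv hz)).congr_deriv ?_
    ring
  have hlap : laplacian (fun w => Real.log (ρ w)) z = 2 * R / (‖z‖ * (2 * R - ‖z‖) ^ 2) := by
    simp only [hρ]
    rw [laplacian_comp_norm (norm_pos_iff.mp hz₁) hg hg']
    field_simp
    ring
  refine ⟨hlap, ?_, ?_, ?_⟩
  · rw [hlap, hρ]
    field_simp
  · rw [neg_lt_neg_iff, div_lt_iff₀ (by positivity)]
    linarith
  · exact neg_neg_of_pos (by positivity)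

/-- Curvature of the m-metric in the punctured disk.
For the density `ρ(z) = 2R/(|z|(2R − |z|))` of the m-metric on the region
`0 < |z| < R/2` of `𝔻_R^*`, one has `Δ(log ρ)(z) = 2R/(|z|(2R − |z|)²)`, so the
Gaussian curvature `K(z) = −Δ(log ρ)(z)/ρ(z)²` equals `−|z|/(2R) ∈ (−1/4, 0)`. -/
theorem curvature_puncturedDisk (R : ℝ) (hR : 0 < R)
    (ρ : ℂ → ℝ) (hρ : ∀ w : ℂ, ρ w = 2 * R / (‖w‖ * (2 * R - ‖w‖)))
    (z : ℂ) (hz₁ : 0 < ‖z‖) (hz₂ : ‖z‖ < R / 2) :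
    laplacian (fun w => Real.log (ρ w)) z = 2 * R / (‖z‖ * (2 * R - ‖z‖) ^ 2) ∧
    -(laplacian (fun w => Real.log (ρ w)) z) / (ρ z) ^ 2 = -(‖z‖ / (2 * R)) ∧
    -(‖z‖ / (2 * R)) ∈ Set.Ioo (-(1 / 4) : ℝ) 0 :=
  curvature_puncturedDisk_general R ρ hρ z hz₁ hz₂
end
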